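/- Let T be an almost-Suslin ω₁-tree. Then ◊_T holds if and only if ◊ holds. -/

import Mathlib

open Set

/-- The first uncountable ordinal `ω₁`. -/
noncomputable def omega1 : Ordinal := Ordinal.omega 1

section TreeDefs

variable {T : Type*} [PartialOrder T]

/-- In a tree, the set of strict predecessors of any node is linearly ordered. -/
def PredsChain (T : Type*) [PartialOrder T] : Prop :=
  ∀ t : T, IsChain (· ≤ ·) {s : T | s < t}

/-- `ht` is *the* height function of the tree: it is strictly monotone on comparable pairs and
the heights of the strict predecessors of `t` are exactly the ordinals below `ht t`; together
with `PredsChain` this says that the set `t↓` of strict predecessors of `t` is well-ordered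
with order type `ht t`. -/
def IsHeightFun (ht : T → Ordinal) : Prop :=
  (∀ s t : T, s < t → ht s < ht t) ∧
  ∀ t : T, ∀ o : Ordinal, o < ht t → ∃ s : T, s < t ∧ ht s = o

/-- The tree has height `ω₁`: every node has height `< ω₁` and every countable ordinal is the
height of some node. -/
def HeightOmega1 (ht : T → Ordinal) : Prop :=
  (∀ t : T, ht t < omega1) ∧ ∀ o : Ordinal, o < omega1 → ∃ t : T, ht t = o

/-- All levels of the tree are countable. -/
def CountableLevels (ht : T → Ordinal) : Prop :=
  ∀ o : Ordinal, {t : T | ht t = o}.Countable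

/-- A tree of height `ω₁` is well-pruned if every node has successors in all later levels. -/
def WellPruned (ht : T → Ordinal) : Prop :=
  ∀ o o' : Ordinal, o < o' → o' < omega1 →
    ∀ s : T, ht s = o → ∃ t : T, s < t ∧ ht t = o'

/-- A special subset of a tree: a union of countably many antichains. -/
def IsSpecialSet (U : Set T) : Prop :=
  ∃ A : ℕ → Set T, (∀ n : ℕ, IsAntichain (· ≤ ·) (A n)) ∧ U ⊆ ⋃ n, A n

/-- Membership in the ideal `NS^T`: there is a regressive map on `B` all of whose fibers
are special. -/
def InNS [OrderBot T] (B : Set T) : Prop :=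
  ∃ f : T → T, (∀ t ∈ B, t ≠ ⊥ → f t < t) ∧
    ∀ t : T, IsSpecialSet {s : T | s ∈ B ∧ f s = t}

/-- The diamond principle `◊_T` for a tree `T`. -/
def DiamondTree (T : Type*) [PartialOrder T] [OrderBot T] : Prop :=
  ∃ D : T → Set T, (∀ t : T, D t ⊆ Set.Iio t) ∧
    ∀ X : Set T, ¬ InNS {t : T | X ∩ Set.Iio t = D t}

end TreeDefs

/-- Club subsets of `ω₁`: closed and unbounded in `ω₁`. -/
def IsClubIn (C : Set Ordinal) : Prop :=
  C ⊆ Set.Iio omega1 ∧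
  (∀ o : Ordinal, o < omega1 → ∃ b ∈ C, o < b) ∧
  ∀ o : Ordinal, o < omega1 → (C ∩ Set.Iio o).Nonempty →
    IsLUB (C ∩ Set.Iio o) o → o ∈ C

/-- Stationary subsets of `ω₁`: sets meeting every club. -/
def IsStationaryIn (S : Set Ordinal) : Prop :=
  ∀ C : Set Ordinal, IsClubIn C → (S ∩ C).Nonempty

/-- The diamond principle `◊(S)` for `S ⊆ ω₁`;  `◊` is `DiamondOn (Set.Iio omega1)`. -/
def DiamondOn (S : Set Ordinal) : Prop :=
  ∃ D : Ordinal → Set Ordinal, (∀ o ∈ S, D o ⊆ Set.Iio o) ∧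
    ∀ X : Set Ordinal, X ⊆ Set.Iio omega1 →
      IsStationaryIn {o ∈ S | X ∩ Set.Iio o = D o}

/-!
A node `t` is coded by the countable ordinal `ω * ht t + n`, where `n` indexes `t` in its
countable level; on the club of ordinals closed under `ξ ↦ ω * ξ + n`, the codes of the
predecessors of a node of height `α` lie below `α`. Hence a `◊`-sequence, decoded at each node,
is a `◊_T`-sequence; conversely, reading a `◊_T`-sequence at the `n`-th node of each level gives
countably many candidate `◊`-sequences, and a single subset of `T` coding counterexamples to all
of them shows that one candidate works.

The ideal `NS^T` is matched with the nonstationary ideal through heights. If the heights of `B`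
avoid a club, send `t ∈ B` to its predecessor at the height of the last club point below `ht t`:
the fibres have bounded height, hence are special. If the heights of `B` are stationary, Fodor's
lemma and the countability of the levels give, for any regressive map, a fibre with stationary
heights, and in an almost-Suslin tree a special set has nonstationary heights.
-/

open Ordinal

theorem countable_Iio_of_lt_omega1 {o : Ordinal} (h : o < omega1) : (Iio o).Countable := by
  rw [← Cardinal.le_aleph0_iff_set_countable, Cardinal.mk_Iio_ordinal, Cardinal.lift_le_aleph0,
    ← Cardinal.lt_aleph_one_iff]
  exact Cardinal.lt_omega_iff_card_lt.1 h

theorem add_one_lt_omega1 {o : Ordinal} (h : o < omega1) : o + 1 < omega1 :=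
  isPrincipal_add_omega 1 h (one_lt_omega0.trans omega0_lt_omega_one)

theorem exists_lt_omega1_forall_lt {s : Set Ordinal} (hs : s.Countable) (h : s ⊆ Iio omega1) :
    ∃ b < omega1, ∀ x ∈ s, x < b := by
  have := hs.to_subtype
  refine ⟨⨆ x : s, (x : Ordinal) + 1,
    iSup_lt_omega_one fun x => add_one_lt_omega1 (h x.2), fun x hx => ?_⟩
  exact (lt_add_one x).trans_le (Ordinal.le_iSup (fun y : s => (y : Ordinal) + 1) ⟨x, hx⟩)

theorem isClubIn_iff {C : Set Ordinal} :
    IsClubIn C ↔ C ⊆ Iio omega1 ∧ (∀ o < omega1, ∃ b ∈ C, o < b) ∧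
      ∀ α < omega1, 0 < α → (∀ ξ < α, ∃ c ∈ C, ξ < c ∧ c < α) → α ∈ C := by
  refine and_congr_right fun _ => and_congr_right fun _ => forall₂_congr fun α hα => ?_
  constructor
  · intro hcl hpos hcof
    obtain ⟨c, hc, -, hcα⟩ := hcof 0 hpos
    refine hcl ⟨c, hc, hcα⟩ ⟨fun x hx => hx.2.le, fun b hb => not_lt.1 fun hbα => ?_⟩
    obtain ⟨c, hc, hbc, hcα⟩ := hcof b hbα
    exact (hb ⟨hc, hcα⟩).not_gt hbc
  · rintro hcof ⟨c, hc, hcα⟩ hlub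
    refine hcof (zero_le.trans_lt hcα) fun ξ hξ => ?_
    obtain ⟨c, ⟨hcC, hcα⟩, hξc, -⟩ := hlub.exists_between hξ
    exact ⟨c, hcC, hξc, hcα⟩

theorem isClubIn_setOf_forall_exists {P : Ordinal → Ordinal → Prop}
    (hP : ∀ ξ < omega1, ∃ b < omega1, P ξ b) :
    IsClubIn {α | α < omega1 ∧ 0 < α ∧ ∀ ξ < α, ∃ b < α, P ξ b} := by
  have step : ∀ x < omega1, ∃ y < omega1, x < y ∧ ∀ ξ < x, ∃ b < y, P ξ b := by
    intro x hx
    choose! w hw hPw using hP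
    obtain ⟨y, hy, hlt⟩ :=
      exists_lt_omega1_forall_lt (((countable_Iio_of_lt_omega1 hx).image w).insert x) (by
        rintro _ (rfl | ⟨ξ, hξ, rfl⟩)
        exacts [hx, hw ξ (lt_trans hξ hx)])
    exact ⟨y, hy, hlt x (mem_insert _ _), fun ξ hξ =>
      ⟨w ξ, hlt _ (mem_insert_of_mem _ ⟨ξ, hξ, rfl⟩), hPw ξ (hξ.trans hx)⟩⟩
  choose! nxt hnxt using step
  refine isClubIn_iff.2 ⟨fun α hα => hα.1, fun o ho => ?_, fun α hα hpos hcof => ⟨hα, hpos, ?_⟩⟩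
  · set b : ℕ → Ordinal := fun k => nxt^[k] o
    have hsucc (k : ℕ) : b (k + 1) = nxt (b k) := Function.iterate_succ_apply' nxt k o
    have hb (k : ℕ) : b k < omega1 := by
      induction k with
      | zero => exact ho
      | succ k ih => rw [hsucc]; exact (hnxt _ ih).1
    have hle (k : ℕ) : b k ≤ ⨆ k, b k := Ordinal.le_iSup b k
    have hob : o < ⨆ k, b k := ((hnxt o ho).2.1).trans_le (hle 1)
    refine ⟨⨆ k, b k, ⟨iSup_lt_omega_one hb, zero_le.trans_lt hob, fun ξ hξ => ?_⟩, hob⟩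
    obtain ⟨k, hk⟩ := Ordinal.lt_iSup_iff.1 hξ
    obtain ⟨w, hw, hPw⟩ := (hnxt _ (hb k)).2.2 ξ hk
    exact ⟨w, hw.trans_le (hsucc k ▸ hle (k + 1)), hPw⟩
  · intro ξ hξ
    obtain ⟨c, ⟨-, -, hc⟩, hξc, hcα⟩ := hcof ξ hξ
    obtain ⟨w, hw, hPw⟩ := hc ξ hξc
    exact ⟨w, hw.trans hcα, hPw⟩

theorem exists_isClubIn_subset_iInter {ι : Type*} [Countable ι] {C : ι → Set Ordinal}
    (hC : ∀ i, IsClubIn (C i)) : ∃ D, IsClubIn D ∧ D ⊆ ⋂ i, C i := by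
  refine ⟨_, isClubIn_setOf_forall_exists (P := fun ξ b => ∀ i, ∃ c ∈ C i, ξ < c ∧ c < b)
    fun ξ hξ => ?_, fun α ⟨hα, hpos, hcof⟩ => mem_iInter.2 fun i => ?_⟩
  · choose c hcC hξc using fun i => (hC i).2.1 ξ hξ
    obtain ⟨b, hb, hcb⟩ := exists_lt_omega1_forall_lt (countable_range c)
      (by rintro _ ⟨i, rfl⟩; exact (hC i).1 (hcC i))
    exact ⟨b, hb, fun i => ⟨c i, hcC i, hξc i, hcb _ ⟨i, rfl⟩⟩⟩
  · refine (isClubIn_iff.1 (hC i)).2.2 α hα hpos fun ξ hξ => ?_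
    obtain ⟨b, hb, hPb⟩ := hcof ξ hξ
    obtain ⟨c, hc, hξc, hcb⟩ := hPb i
    exact ⟨c, hc, hξc, hcb.trans hb⟩

theorem exists_isClubIn_forall_lt_mem {C : Ordinal → Set Ordinal} (hC : ∀ γ, IsClubIn (C γ)) :
    ∃ D, IsClubIn D ∧ ∀ α ∈ D, ∀ γ < α, α ∈ C γ := by
  refine ⟨_, isClubIn_setOf_forall_exists (P := fun ξ b => ∀ γ ≤ ξ, ∃ c ∈ C γ, ξ < c ∧ c < b)
    fun ξ hξ => ?_, fun α ⟨hα, hpos, hcof⟩ γ hγ => ?_⟩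
  · choose c hcC hξc using fun γ => (hC γ).2.1 ξ hξ
    have hIic : (Iic ξ).Countable :=
      (countable_Iio_of_lt_omega1 (add_one_lt_omega1 hξ)).mono
        fun γ hγ => (mem_Iic.1 hγ).trans_lt (lt_add_one ξ)
    obtain ⟨b, hb, hcb⟩ := exists_lt_omega1_forall_lt (hIic.image c)
      (by rintro _ ⟨γ, -, rfl⟩; exact (hC γ).1 (hcC γ))
    exact ⟨b, hb, fun γ hγ => ⟨c γ, hcC γ, hξc γ, hcb _ ⟨γ, hγ, rfl⟩⟩⟩
  · refine (isClubIn_iff.1 (hC γ)).2.2 α hα hpos fun ξ hξ => ?_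
    obtain ⟨b, hb, hPb⟩ := hcof (max ξ γ) (max_lt hξ hγ)
    obtain ⟨c, hc, hξc, hcb⟩ := hPb γ (le_max_right ξ γ)
    exact ⟨c, hc, (le_max_left ξ γ).trans_lt hξc, hcb.trans hb⟩

def clubFilter : Filter Ordinal :=
  Filter.ofCountableInter {s | ∃ C, IsClubIn C ∧ C ⊆ s}
    (fun S hS hsub => by
      have := hS.to_subtype
      choose C hC hCs using fun s : S => hsub s.2
      obtain ⟨D, hD, hDC⟩ := exists_isClubIn_subset_iInter hC
      exact ⟨D, hD, fun α hα => mem_sInter.2 fun s hs => hCs ⟨s, hs⟩ (mem_iInter.1 (hDC hα) _)⟩)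
    fun _ _ ⟨C, hC, hCs⟩ hst => ⟨C, hC, hCs.trans hst⟩

instance : CountableInterFilter clubFilter := Filter.countableInter_ofCountableInter _ _ _

theorem mem_clubFilter {s : Set Ordinal} : s ∈ clubFilter ↔ ∃ C, IsClubIn C ∧ C ⊆ s :=
  Filter.mem_ofCountableInter _ _

theorem IsClubIn.mem_clubFilter {C : Set Ordinal} (hC : IsClubIn C) : C ∈ clubFilter :=
  _root_.mem_clubFilter.2 ⟨C, hC, subset_rfl⟩

theorem isStationaryIn_iff_frequently {S : Set Ordinal} :
    IsStationaryIn S ↔ ∃ᶠ α in clubFilter, α ∈ S := by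
  simp only [IsStationaryIn, Filter.Frequently, Filter.Eventually, _root_.mem_clubFilter,
    not_exists, not_and, not_subset]
  exact forall₂_congr fun C _ =>
    ⟨fun ⟨α, hS, hC⟩ => ⟨α, hC, not_not.2 hS⟩, fun ⟨α, hC, hS⟩ => ⟨α, not_not.1 hS, hC⟩⟩

theorem IsStationaryIn.mono {S S' : Set Ordinal} (hS : IsStationaryIn S) (h : S ⊆ S') :
    IsStationaryIn S' := fun C hC => (hS C hC).mono (inter_subset_inter_left C h)

theorem eventually_clubFilter_forall_exists {P : Ordinal → Ordinal → Prop}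
    (hP : ∀ ξ < omega1, ∃ b < omega1, P ξ b) :
    ∀ᶠ α in clubFilter, α < omega1 ∧ 0 < α ∧ ∀ ξ < α, ∃ b < α, P ξ b :=
  (isClubIn_setOf_forall_exists hP).mem_clubFilter

theorem eventually_clubFilter_pos : ∀ᶠ α in clubFilter, 0 < α :=
  (eventually_clubFilter_forall_exists (P := fun _ _ => True) fun ξ hξ => ⟨ξ, hξ, trivial⟩).mono
    fun _ h => h.2.1

theorem eventually_clubFilter_forall_lt {p : Ordinal → Ordinal → Prop}
    (h : ∀ γ, ∀ᶠ α in clubFilter, p γ α) : ∀ᶠ α in clubFilter, ∀ γ < α, p γ α := by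
  choose C hC hCp using fun γ => _root_.mem_clubFilter.1 (h γ)
  obtain ⟨D, hD, hDC⟩ := exists_isClubIn_forall_lt_mem hC
  exact Filter.mem_of_superset hD.mem_clubFilter fun α hα γ hγ => hCp γ (hDC α hα γ hγ)

theorem exists_frequently_eq_of_regressive {p : Ordinal → Prop} {g : Ordinal → Ordinal}
    (hp : ∃ᶠ α in clubFilter, p α) (hg : ∀ α, p α → g α < α) :
    ∃ γ, ∃ᶠ α in clubFilter, p α ∧ g α = γ := by
  by_contra! h
  obtain ⟨α, hα, hαγ⟩ := (hp.and_eventually (eventually_clubFilter_forall_lt h)).exists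
  exact hαγ (g α) (hg α hα) hα rfl

theorem Filter.Frequently.exists_mem_of_countable {α ι : Type*} {l : Filter α}
    [CountableInterFilter l] {S : Set ι} (hS : S.Countable) {p : ι → α → Prop}
    (h : ∃ᶠ x in l, ∃ i ∈ S, p i x) : ∃ i ∈ S, ∃ᶠ x in l, p i x := by
  by_contra! hn
  refine h (((eventually_countable_ball hS).2 hn).mono fun x hx => ?_)
  rintro ⟨i, hi, hpi⟩
  exact hx i hi hpi

theorem IsClubIn.exists_regressive_notMem {C : Set Ordinal} (hC : IsClubIn C) :
    ∃ g : Ordinal → Ordinal, (∀ α < omega1, 0 < α → α ∉ C → g α < α) ∧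
      ∀ γ < omega1, ∃ δ < omega1, γ < δ ∧ ∀ α ∉ C, g α = γ → α < δ := by
  have hbdd (α : Ordinal) : BddAbove (C ∩ Iio α) := ⟨α, fun _ hx => hx.2.le⟩
  refine ⟨fun α => sSup (C ∩ Iio α), fun α hα hpos hαC => ?_, fun γ hγ => ?_⟩
  · refine (csSup_le' fun _ hx => hx.2.le).lt_of_ne fun hsup => hαC ?_
    have hne : (C ∩ Iio α).Nonempty := by
      by_contra hempty
      rw [not_nonempty_iff_eq_empty.1 hempty, csSup_empty] at hsup
      exact hpos.ne hsup
    have hlub := isLUB_csSup hne (hbdd α)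
    rw [hsup] at hlub
    exact hC.2.2 α hα hne hlub
  · obtain ⟨δ, hδC, hγδ⟩ := hC.2.1 γ hγ
    refine ⟨δ, hC.1 hδC, hγδ, fun α hαC hgα => lt_of_not_ge fun hδα => ?_⟩
    have hδα : δ < α := hδα.lt_of_ne fun h => hαC (h ▸ hδC)
    exact hγδ.not_ge (hgα ▸ le_csSup (hbdd α) ⟨hδC, hδα⟩)

theorem CountableLevels.exists_enum {T : Type*} [Nonempty T] {ht : T → Ordinal}
    (hlev : CountableLevels ht) :
    ∃ (enum : Ordinal → ℕ → T) (idx : T → ℕ), ∀ t, enum (ht t) (idx t) = t := by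
  choose enum henum using fun o => countable_iff_exists_subset_range.1 (hlev o)
  choose idx hidx using fun t => henum (ht t) (rfl : ht t = ht t)
  exact ⟨enum, idx, hidx⟩

section Tree

variable {T : Type*} [PartialOrder T] {ht : T → Ordinal}

theorem IsHeightFun.isAntichain_level (hht : IsHeightFun ht) (o : Ordinal) :
    IsAntichain (· ≤ ·) {t | ht t = o} := fun s hs t ht' hne hle =>
  (hht.1 s t (hle.lt_of_ne hne)).ne (hs.trans ht'.symm)

theorem IsHeightFun.isSpecialSet_of_forall_lt (hht : IsHeightFun ht) {B : Set T} {δ : Ordinal}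
    (hδ : δ < omega1) (hB : ∀ t ∈ B, ht t < δ) : IsSpecialSet B := by
  obtain ⟨f, hf⟩ := countable_iff_exists_subset_range.1 (countable_Iio_of_lt_omega1 hδ)
  refine ⟨fun n => {t | ht t = f n}, fun n => hht.isAntichain_level _, fun t htB => ?_⟩
  obtain ⟨n, hn⟩ := hf (hB t htB)
  exact mem_iUnion.2 ⟨n, hn.symm⟩

theorem IsHeightFun.apply_bot [OrderBot T] (hht : IsHeightFun ht) : ht ⊥ = 0 :=
  nonpos_iff_eq_zero.1 <| not_lt.1 fun hpos => by
    obtain ⟨s, hs, -⟩ := hht.2 ⊥ 0 hpos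
    exact not_lt_bot hs

theorem IsHeightFun.pos_of_ne_bot [OrderBot T] (hht : IsHeightFun ht) {t : T} (h : t ≠ ⊥) :
    0 < ht t :=
  hht.apply_bot ▸ hht.1 ⊥ t h.bot_lt

variable [OrderBot T]

theorem inNS_of_not_isStationaryIn (hht : IsHeightFun ht) (hlt : ∀ t, ht t < omega1)
    {B : Set T} (hB : ¬ IsStationaryIn (ht '' B)) : InNS B := by
  simp only [IsStationaryIn, not_forall, not_nonempty_iff_eq_empty] at hB
  obtain ⟨C, hC, hBC⟩ := hB
  have hnot (t : T) (htB : t ∈ B) : ht t ∉ C := fun htC =>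
    (eq_empty_iff_forall_notMem.1 hBC) (ht t) ⟨⟨t, htB, rfl⟩, htC⟩
  obtain ⟨g, hg, hgδ⟩ := hC.exists_regressive_notMem
  choose! f hf hfg using fun t (h : g (ht t) < ht t) => hht.2 t _ h
  have hreg (t : T) (htB : t ∈ B) (hne : t ≠ ⊥) : g (ht t) < ht t :=
    hg _ (hlt t) (hht.pos_of_ne_bot hne) (hnot t htB)
  refine ⟨f, fun t htB hne => hf t (hreg t htB hne), fun s => ?_⟩
  obtain ⟨δ, hδ, hsδ, hδB⟩ := hgδ (ht s) (hlt s)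
  refine hht.isSpecialSet_of_forall_lt hδ fun t ⟨htB, hfts⟩ => ?_
  by_cases hne : t = ⊥
  · rw [hne, hht.apply_bot]
    exact zero_le.trans_lt hsδ
  · exact hδB _ (hnot t htB) (hfts ▸ hfg t (hreg t htB hne)).symm

theorem exists_frequently_image_fiber (hht : IsHeightFun ht) (hlev : CountableLevels ht)
    {B : Set T} (hB : ∃ᶠ α in clubFilter, α ∈ ht '' B) {f : T → T}
    (hf : ∀ t ∈ B, t ≠ ⊥ → f t < t) :
    ∃ s, ∃ᶠ α in clubFilter, α ∈ ht '' {t | t ∈ B ∧ f t = s} := by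
  choose! sel hselB hsel using fun α (h : α ∈ ht '' B) => h
  have hreg (α : Ordinal) (h : α ∈ ht '' B ∧ 0 < α) : ht (f (sel α)) < α := by
    have hne : sel α ≠ ⊥ := fun hbot => h.2.ne' (by rw [← hsel α h.1, hbot, hht.apply_bot])
    have hlt := hht.1 _ _ (hf _ (hselB α h.1) hne)
    rwa [hsel α h.1] at hlt
  obtain ⟨γ, hγ⟩ :=
    exists_frequently_eq_of_regressive (hB.and_eventually eventually_clubFilter_pos) hreg
  obtain ⟨s, -, hs⟩ := (hγ.mono fun α h => ⟨f (sel α), h.2, h.1, rfl⟩).exists_mem_of_countable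
    (hlev γ) (p := fun s α => (α ∈ ht '' B ∧ 0 < α) ∧ f (sel α) = s)
  exact ⟨s, hs.mono fun α ⟨⟨hαB, _⟩, hfs⟩ => ⟨sel α, ⟨hselB α hαB, hfs⟩, hsel α hαB⟩⟩

theorem not_inNS_of_isStationaryIn (hht : IsHeightFun ht) (hlev : CountableLevels ht)
    (has : ∀ A : Set T, IsAntichain (· ≤ ·) A → ¬ IsStationaryIn (ht '' A))
    {B : Set T} (hB : IsStationaryIn (ht '' B)) : ¬ InNS B := by
  rintro ⟨f, hf, hfib⟩
  obtain ⟨s, hs⟩ := exists_frequently_image_fiber hht hlev (isStationaryIn_iff_frequently.1 hB) hf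
  obtain ⟨A, hA, hsub⟩ := hfib s
  have hcover : ∃ᶠ α in clubFilter, ∃ n ∈ Set.univ, α ∈ ht '' A n :=
    hs.mono fun α ⟨t, htB, hα⟩ =>
      let ⟨n, hn⟩ := mem_iUnion.1 (hsub htB)
      ⟨n, mem_univ n, t, hn, hα⟩
  obtain ⟨n, -, hn⟩ := hcover.exists_mem_of_countable countable_univ
  exact has (A n) (hA n) (isStationaryIn_iff_frequently.2 hn)

end Tree

theorem omega0_mul_add_natCast_inj {ξ ξ' : Ordinal} {m n : ℕ} :
    ω * ξ + m = ω * ξ' + n ↔ ξ = ξ' ∧ m = n := by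
  have hdiv (ξ : Ordinal) (m : ℕ) : (ω * ξ + m) / ω = ξ := by
    rw [mul_add_div _ omega0_ne_zero, div_eq_zero_of_lt (natCast_lt_omega0 m), add_zero]
  have hmod (ξ : Ordinal) (m : ℕ) : (ω * ξ + m) % ω = m := by
    rw [mul_add_mod_self, mod_eq_of_lt (natCast_lt_omega0 m)]
  refine ⟨fun h => ⟨?_, ?_⟩, fun ⟨h₁, h₂⟩ => h₁ ▸ h₂ ▸ rfl⟩
  · rw [← hdiv ξ m, h, hdiv]
  · exact_mod_cast (hmod ξ m).symm.trans (h ▸ hmod ξ' n)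

theorem omega0_mul_add_natCast_lt_omega1 {ξ : Ordinal} (hξ : ξ < omega1) (n : ℕ) :
    ω * ξ + n < omega1 :=
  isPrincipal_add_omega 1 (isPrincipal_mul_omega 1 omega0_lt_omega_one hξ)
    ((natCast_lt_omega0 n).trans omega0_lt_omega_one)

theorem eventually_omega0_mul_add_lt :
    ∀ᶠ α in clubFilter, ∀ ξ < α, ∀ n : ℕ, ω * ξ + n < α := by
  refine (eventually_clubFilter_forall_exists (P := fun ξ b => ∀ n : ℕ, ω * ξ + n < b)
    fun ξ hξ => ⟨ω * (ξ + 1), isPrincipal_mul_omega 1 omega0_lt_omega_one (add_one_lt_omega1 hξ),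
      fun n => ?_⟩).mono fun α ⟨_, _, h⟩ ξ hξ n => ?_
  · rw [mul_add_one]
    exact (add_lt_add_iff_left _).2 (natCast_lt_omega0 n)
  · obtain ⟨b, hb, hPb⟩ := h ξ hξ
    exact (hPb n).trans hb

section Diamond

universe u

variable {T : Type*} [PartialOrder T] [OrderBot T] {ht : T → Ordinal.{u}}

theorem DiamondTree.diamondOn (hht : IsHeightFun ht) (hlt : ∀ t, ht t < omega1)
    (hlev : CountableLevels ht) (h : DiamondTree T) : DiamondOn (Iio omega1.{u}) := by
  have : Nonempty T := ⟨⊥⟩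
  obtain ⟨enum, idx, henum⟩ := hlev.exists_enum
  obtain ⟨D, -, hD⟩ := h
  by_contra hno
  have hfail (n : ℕ) : ∃ X : Set Ordinal, ∀ᶠ α in clubFilter, ¬ (α < omega1 ∧
      X ∩ Iio α = {ξ | ξ < α ∧ ∃ s ∈ D (enum α n), ht s = ω * ξ + n}) := by
    by_contra! hn
    exact hno ⟨_, fun _ _ _ hξ => hξ.1, fun X _ => isStationaryIn_iff_frequently.2 (hn X)⟩
  choose X hX using hfail
  -- `Y` codes all the counterexamples `X n` at once.
  set Y : Set T := {t | ∃ ξ n, ξ ∈ X n ∧ ht t = ω * ξ + n}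
  have hG : IsStationaryIn (ht '' {t | Y ∩ Iio t = D t}) :=
    not_not.1 (mt (inNS_of_not_isStationaryIn hht hlt) (hD Y))
  obtain ⟨_, ⟨t, htG, rfl⟩, hclosed, hXt⟩ := ((isStationaryIn_iff_frequently.1 hG).and_eventually
    (eventually_omega0_mul_add_lt.and (eventually_countable_forall.2 hX))).exists
  refine hXt (idx t) ⟨hlt t, ?_⟩
  rw [henum t]
  ext ξ
  constructor
  · rintro ⟨hξX, hξt⟩
    obtain ⟨s, hst, hs⟩ := hht.2 t _ (hclosed ξ hξt (idx t))
    exact ⟨hξt, s, htG ▸ ⟨⟨ξ, idx t, hξX, hs⟩, hst⟩, hs⟩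
  · rintro ⟨hξt, s, hsD, hs⟩
    rw [← htG] at hsD
    obtain ⟨⟨ξ', m, hξ'X, hs'⟩, -⟩ := hsD
    obtain ⟨rfl, rfl⟩ := omega0_mul_add_natCast_inj.1 (hs'.symm.trans hs)
    exact ⟨hξ'X, hξt⟩

theorem DiamondOn.diamondTree (hht : IsHeightFun ht) (hΩ : HeightOmega1 ht)
    (hlev : CountableLevels ht)
    (has : ∀ A : Set T, IsAntichain (· ≤ ·) A → ¬ IsStationaryIn (ht '' A))
    (h : DiamondOn (Iio omega1.{u})) : DiamondTree T := by
  have : Nonempty T := ⟨⊥⟩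
  obtain ⟨enum, idx, henum⟩ := hlev.exists_enum
  let code (t : T) : Ordinal := ω * ht t + idx t
  have hcode : Function.Injective code := fun s t hst => by
    obtain ⟨h₁, h₂⟩ := omega0_mul_add_natCast_inj.1 hst
    rw [← henum s, ← henum t, h₁, h₂]
  obtain ⟨D, -, hD⟩ := h
  refine ⟨fun t => {s | s < t ∧ code s ∈ D (ht t)}, fun t s hs => hs.1, fun X => ?_⟩
  refine not_inNS_of_isStationaryIn hht hlev has (isStationaryIn_iff_frequently.2 ?_)
  have hguess := isStationaryIn_iff_frequently.1 (hD (code '' X) (by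
    rintro _ ⟨t, -, rfl⟩
    exact omega0_mul_add_natCast_lt_omega1 (hΩ.1 t) _))
  refine (hguess.and_eventually eventually_omega0_mul_add_lt).mono
    fun α ⟨⟨hα, hXα⟩, hclosed⟩ => ?_
  obtain ⟨t, rfl⟩ := hΩ.2 α hα
  refine ⟨t, Set.ext fun s => ?_, rfl⟩
  show s ∈ X ∩ Iio t ↔ s < t ∧ code s ∈ D (ht t)
  rw [← hXα]
  exact ⟨fun ⟨hsX, hst⟩ => ⟨hst, ⟨s, hsX, rfl⟩, hclosed _ (hht.1 s t hst) _⟩,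
    fun ⟨hst, ⟨s', hs'X, hs'⟩, _⟩ => ⟨hcode hs' ▸ hs'X, hst⟩⟩

end Diamond

section Lift

universe u v

theorem lift_lt_omega1 {a : Ordinal.{u}} : lift.{v} a < omega1.{max u v} ↔ a < omega1.{u} :=
  lift_lt_omega_one

theorem exists_lift_eq_of_lt_omega1 {b : Ordinal.{max u v}} (h : b < omega1.{max u v}) :
    ∃ a : Ordinal.{u}, lift.{v} a = b :=
  mem_range_lift_of_le (a := omega1.{u}) (by simpa [omega1] using h.le)

theorem lift_pos {a : Ordinal.{u}} : 0 < lift.{v} a ↔ 0 < a := by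
  simpa only [lift_zero] using lift_lt.{v} (a := 0) (b := a)

theorem IsClubIn.image_lift {C : Set Ordinal.{u}} (hC : IsClubIn C) :
    IsClubIn (lift.{v} '' C) := by
  obtain ⟨hsub, hunb, hcl⟩ := isClubIn_iff.1 hC
  refine isClubIn_iff.2 ⟨?_, fun o ho => ?_, fun α hα hpos hcof => ?_⟩
  · rintro _ ⟨c, hc, rfl⟩
    exact lift_lt_omega1.2 (hsub hc)
  · obtain ⟨a, rfl⟩ := exists_lift_eq_of_lt_omega1.{u, v} ho
    obtain ⟨c, hc, hac⟩ := hunb a (lift_lt_omega1.1 ho)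
    exact ⟨_, mem_image_of_mem _ hc, lift_lt.2 hac⟩
  · obtain ⟨a, rfl⟩ := exists_lift_eq_of_lt_omega1.{u, v} hα
    refine mem_image_of_mem _ (hcl a (lift_lt_omega1.1 hα) (lift_pos.1 hpos) fun ξ hξ => ?_)
    obtain ⟨_, ⟨c, hc, rfl⟩, hξc, hca⟩ := hcof (lift.{v} ξ) (lift_lt.2 hξ)
    exact ⟨c, hc, lift_lt.1 hξc, lift_lt.1 hca⟩

theorem IsClubIn.preimage_lift {C : Set Ordinal.{max u v}} (hC : IsClubIn C) :
    IsClubIn (lift.{v} ⁻¹' C) := by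
  obtain ⟨hsub, hunb, hcl⟩ := isClubIn_iff.1 hC
  refine isClubIn_iff.2 ⟨fun a ha => lift_lt_omega1.1 (hsub ha), fun o ho => ?_,
    fun α hα hpos hcof => hcl _ (lift_lt_omega1.2 hα) (lift_pos.2 hpos) fun ξ hξ => ?_⟩
  · obtain ⟨c, hc, hoc⟩ := hunb _ (lift_lt_omega1.{u, v}.2 ho)
    obtain ⟨c, rfl⟩ := exists_lift_eq_of_lt_omega1.{u, v} (hsub hc)
    exact ⟨c, hc, lift_lt.1 hoc⟩
  · obtain ⟨ξ, rfl⟩ := mem_range_lift_of_le hξ.le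
    obtain ⟨c, hc, hξc, hcα⟩ := hcof ξ (lift_lt.1 hξ)
    exact ⟨_, hc, lift_lt.2 hξc, lift_lt.2 hcα⟩

theorem IsStationaryIn.image_lift {S : Set Ordinal.{u}} (hS : IsStationaryIn S) :
    IsStationaryIn (lift.{v} '' S) := fun _ hC =>
  let ⟨_, haS, haC⟩ := hS _ hC.preimage_lift
  ⟨_, mem_image_of_mem _ haS, haC⟩

theorem IsStationaryIn.preimage_lift {S : Set Ordinal.{max u v}} (hS : IsStationaryIn S) :
    IsStationaryIn (lift.{v} ⁻¹' S) := fun _ hC =>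
  let ⟨_, hbS, a, haC, hab⟩ := hS _ (hC.image_lift.{u, v})
  ⟨a, show lift.{v} a ∈ S from hab ▸ hbS, haC⟩

theorem DiamondOn.lift_univ (h : DiamondOn (Iio omega1.{u})) :
    DiamondOn (Iio omega1.{max u v}) := by
  obtain ⟨D, hD, hguess⟩ := h
  refine ⟨fun b => {y | ∃ a x, lift.{v} a = b ∧ x ∈ D a ∧ lift.{v} x = y}, ?_, fun X hX => ?_⟩
  · rintro _ hb _ ⟨a, x, rfl, hx, rfl⟩
    exact lift_lt.2 (hD a (lift_lt_omega1.1 hb) hx)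
  · have hX' : lift.{v} ⁻¹' X ⊆ Iio omega1 := fun a ha => lift_lt_omega1.1 (hX ha)
    refine ((hguess _ hX').image_lift.{u, v}).mono ?_
    rintro _ ⟨a, ⟨ha, hXa⟩, rfl⟩
    refine ⟨lift_lt_omega1.2 ha, Set.ext fun y => ⟨fun ⟨hyX, hya⟩ => ?_, ?_⟩⟩
    · obtain ⟨x, rfl⟩ := mem_range_lift_of_le hya.le
      exact ⟨a, x, rfl, hXa ▸ ⟨hyX, lift_lt.1 hya⟩, rfl⟩
    · rintro ⟨a', x, ha', hx, rfl⟩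
      obtain rfl := lift_inj.1 ha'
      rw [← hXa] at hx
      exact ⟨hx.1, lift_lt.2 hx.2⟩

theorem DiamondOn.of_lift_univ (h : DiamondOn (Iio omega1.{max u v})) :
    DiamondOn (Iio omega1.{u}) := by
  obtain ⟨D, hD, hguess⟩ := h
  refine ⟨fun a => lift.{v} ⁻¹' D (lift.{v} a),
    fun a ha x hx => lift_lt.1 (hD _ (lift_lt_omega1.2 ha) hx), fun X hX => ?_⟩
  refine ((hguess (lift.{v} '' X) ?_).preimage_lift.{u, v}).mono ?_
  · rintro _ ⟨a, ha, rfl⟩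
    exact lift_lt_omega1.2 (hX ha)
  · rintro a ⟨ha, hXa⟩
    refine ⟨lift_lt_omega1.1 ha, ?_⟩
    show X ∩ Iio a = lift.{v} ⁻¹' D (lift.{v} a)
    rw [← hXa, preimage_inter, preimage_image_eq _ fun _ _ => lift_inj.1]
    exact congrArg (X ∩ ·) (Set.ext fun _ => lift_lt.symm)

theorem diamondOn_univ_iff : DiamondOn (Iio omega1.{u}) ↔ DiamondOn (Iio omega1.{v}) :=
  ⟨fun h => h.lift_univ.{u, v}.of_lift_univ, fun h => h.lift_univ.{v, u}.of_lift_univ⟩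

end Lift

theorem stmt18_general {T : Type*} [PartialOrder T] [OrderBot T]
    (ht : T → Ordinal)
    (hht : IsHeightFun ht) (hΩ : HeightOmega1 ht) (hlev : CountableLevels ht)
    (has : ∀ A : Set T, IsAntichain (· ≤ ·) A → ¬ IsStationaryIn (ht '' A)) :
    DiamondTree T ↔ DiamondOn (Set.Iio omega1) :=
  (⟨fun h => h.diamondOn hht hΩ.1 hlev, fun h => h.diamondTree hht hΩ hlev has⟩ :
    DiamondTree T ↔ _).trans diamondOn_univ_iff

/-- Let `T` be an almost-Suslin `ω₁`-tree (the set of heights of every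
antichain is nonstationary in `ω₁`). Then `◊_T` holds if and only if `◊` holds. -/
theorem stmt18 {T : Type*} [PartialOrder T] [OrderBot T]
    (hchain : PredsChain T) (ht : T → Ordinal)
    (hht : IsHeightFun ht) (hΩ : HeightOmega1 ht) (hlev : CountableLevels ht)
    (has : ∀ A : Set T, IsAntichain (· ≤ ·) A → ¬ IsStationaryIn (ht '' A)) :
    DiamondTree T ↔ DiamondOn (Set.Iio omega1) :=
  stmt18_general ht hht hΩ hlev has
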